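/- Let n₁,…,n_k be positive integers, N = Σ_i n_i, and let ρ = ⊕_{i=1}^{k} p_i·ρ_i be a block-diagonal density matrix, where (p₁,…,p_k) is a probability vector and each ρ_i is an n_i×n_i density matrix. Then the infimum of { H(w) : ρ = Σ_j w_j·σ_j, (w_j) a probability vector, each σ_j of the form 0 ⊕ … ⊕ |φ_j⟩⟨φ_j| ⊕ … ⊕ 0 for a block index and a unit vector φ_j } is attained and equals H(p) + Σ_{i=1}^{k} p_i · S_VN(ρ_i). -/

import Mathlib

open Matrix
open scoped ComplexOrder

/-- The Shannon entropy `H(p) = −Σ_i p_i log p_i` (with `0·log 0 = 0`,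
which holds since `Real.log 0 = 0`). -/
noncomputable def shannonEntropy {m : ℕ} (p : Fin m → ℝ) : ℝ :=
  -∑ i, p i * Real.log (p i)

open scoped Classical in
/-- The von Neumann entropy `S_VN(ρ) = −Σ_i λ_i log λ_i`, where `λ_i` are the
eigenvalues of the (Hermitian) matrix `ρ` listed with multiplicity. -/
noncomputable def vonNeumannEntropy {ι : Type*} [Fintype ι] [DecidableEq ι]
    (ρ : Matrix ι ι ℂ) : ℝ :=
  if h : ρ.IsHermitian then -∑ i, h.eigenvalues i * Real.log (h.eigenvalues i) else 0

/-!
Every block-pure decomposition `ρ = Σ_j w_j |ψ_j⟩⟨ψ_j|` is in particular a decomposition of `ρ`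
into pure states, and for those `H(w) ≥ S_VN(ρ)`: in an eigenbasis `e_m` of `ρ` (eigenvalues `λ_m`)
the numbers `c_{jm} = w_j |⟨e_m, ψ_j⟩|²` have row sums `w_j` and column sums `λ_m`, the vectors
`(√w_j ⟨ψ_j, e_m⟩)_j` are orthogonal with squared norms `λ_m`, so Bessel's inequality gives
`Σ_m c_{jm} / λ_m ≤ 1`, and concavity of `η(x) = -x log x` then yields
`Σ_m η(λ_m) ≤ Σ_j η(w_j)`.
The eigenvalues of `ρ` are the `p_i λ_{i,m}`, whence `S_VN(ρ) = H(p) + Σ_i p_i S_VN(ρ_i)`, and the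
eigenvectors of the blocks form a block-pure decomposition attaining this value.
-/

open Real

theorem sum_mul_negMulLog_le_negMulLog_sum {κ : Type*} [Fintype κ] (d x : κ → ℝ)
    (hd : ∀ m, 0 ≤ d m) (hd1 : ∑ m, d m ≤ 1) (hx : ∀ m, 0 ≤ x m) :
    ∑ m, d m * negMulLog (x m) ≤ negMulLog (∑ m, d m * x m) := by
  -- put the missing weight `1 - ∑ d` on the point `0`, where `negMulLog` vanishes
  have h := concaveOn_negMulLog.le_map_sum (t := (Finset.univ : Finset (Option κ)))
    (w := fun o => o.elim (1 - ∑ m, d m) d) (p := fun o => o.elim 0 x)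
    (fun o _ => by cases o with
      | none => simpa using hd1
      | some m => exact hd m)
    (by simp [Fintype.sum_option])
    (fun o _ => by cases o with
      | none => exact Set.mem_Ici.2 le_rfl
      | some m => exact Set.mem_Ici.2 (hx m))
  simpa [Fintype.sum_option, smul_eq_mul] using h

theorem sum_negMulLog_sum_le_sum_negMulLog_sum {ι κ : Type*} [Fintype ι] [Fintype κ]
    (c : ι → κ → ℝ) (hc : ∀ j m, 0 ≤ c j m)
    (hbessel : ∀ j, ∑ m, c j m / ∑ j', c j' m ≤ 1) :
    ∑ m, negMulLog (∑ j, c j m) ≤ ∑ j, negMulLog (∑ m, c j m) := by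
  set col := fun m => ∑ j, c j m
  have hcol_nonneg m : 0 ≤ col m := Finset.sum_nonneg fun j _ => hc j m
  -- a zero column sum forces a zero column, so the junk value `x / 0 = 0` is harmless
  have hrow j : ∑ m, c j m / col m * col m = ∑ m, c j m := by
    refine Finset.sum_congr rfl fun m _ => ?_
    by_cases h : col m = 0
    · rw [h, mul_zero, ((Finset.sum_eq_zero_iff_of_nonneg fun j _ => hc j m).1 h j
        (Finset.mem_univ j))]
    · exact div_mul_cancel₀ _ h
  have hweights m : (∑ j, c j m / col m) * negMulLog (col m) = negMulLog (col m) := by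
    rw [← Finset.sum_div]
    by_cases h : col m = 0
    · simp [h]
    · rw [div_self h, one_mul]
  calc ∑ m, negMulLog (col m)
      = ∑ j, ∑ m, c j m / col m * negMulLog (col m) := by
        rw [Finset.sum_comm]
        simp_rw [← Finset.sum_mul, hweights]
    _ ≤ ∑ j, negMulLog (∑ m, c j m / col m * col m) :=
        Finset.sum_le_sum fun j _ => sum_mul_negMulLog_le_negMulLog_sum _ _
          (fun m => div_nonneg (hc j m) (hcol_nonneg m)) (hbessel j) hcol_nonneg
    _ = ∑ j, negMulLog (∑ m, c j m) := by simp_rw [hrow]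

theorem Pairwise.sum_norm_inner_sq_div_norm_sq_le {𝕜 E ι : Type*} [RCLike 𝕜]
    [NormedAddCommGroup E] [InnerProductSpace 𝕜 E] [Fintype ι] {v : ι → E}
    (hv : Pairwise fun i j => inner 𝕜 (v i) (v j) = 0) (x : E) :
    ∑ i, ‖inner 𝕜 (v i) x‖ ^ 2 / ‖v i‖ ^ 2 ≤ ‖x‖ ^ 2 := by
  classical
  set u : {i // v i ≠ 0} → E := fun i => (‖v i‖⁻¹ : 𝕜) • v i
  have hu : Orthonormal 𝕜 u :=
    ⟨fun i => norm_smul_inv_norm i.2, fun i j hij => by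
      simp [u, inner_smul_left, inner_smul_right, hv (Subtype.coe_injective.ne hij)]⟩
  calc ∑ i, ‖inner 𝕜 (v i) x‖ ^ 2 / ‖v i‖ ^ 2
      = ∑ i ∈ Finset.univ.filter (v · ≠ 0), ‖inner 𝕜 (v i) x‖ ^ 2 / ‖v i‖ ^ 2 := by
        refine (Finset.sum_filter_of_ne fun i _ h => ?_).symm
        rintro (hi : v i = 0)
        simp [hi] at h
    _ = ∑ i : {i // v i ≠ 0}, ‖inner 𝕜 (v i) x‖ ^ 2 / ‖v i‖ ^ 2 :=
        Finset.sum_subtype _ (by simp) _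
    _ = ∑ i, ‖inner 𝕜 (u i) x‖ ^ 2 := by
        simp [u, inner_smul_left, norm_mul, mul_pow, div_eq_inv_mul]
    _ ≤ ‖x‖ ^ 2 := hu.sum_inner_products_le x

theorem sum_negMulLog_le_of_diagonal_eq_sum_vecMulVec {ι J : Type*} [Fintype ι] [DecidableEq ι]
    [Fintype J] (lam : ι → ℝ) (w : J → ℝ) (hw : ∀ j, 0 ≤ w j) (z : J → ι → ℂ)
    (hz : ∀ j, ∑ m, ‖z j m‖ ^ 2 = 1)
    (h : diagonal (fun m => (lam m : ℂ)) = ∑ j, (w j : ℂ) • vecMulVec (z j) (star (z j))) :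
    ∑ m, negMulLog (lam m) ≤ ∑ j, negMulLog (w j) := by
  classical
  have hentry m m' : diagonal (fun m => (lam m : ℂ)) m m'
      = ∑ j, (w j : ℂ) * z j m * star (z j m') := by
    simp [h, Matrix.sum_apply, vecMulVec_apply, mul_assoc]
  set c : J → ι → ℝ := fun j m => w j * ‖z j m‖ ^ 2
  have hrow j : ∑ m, c j m = w j := by rw [← Finset.mul_sum, hz, mul_one]
  have hcol m : ∑ j, c j m = lam m := by
    have := hentry m m
    simp_rw [diagonal_apply_eq, mul_assoc, RCLike.star_def, Complex.mul_conj,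
      Complex.normSq_eq_norm_sq] at this
    exact_mod_cast this.symm
  set v : ι → EuclideanSpace ℂ J := fun m => WithLp.toLp 2 fun j => (√(w j) : ℂ) * star (z j m)
  have hv_inner m m' : inner ℂ (v m) (v m') = diagonal (fun m => (lam m : ℂ)) m m' := by
    rw [hentry, PiLp.inner_apply]
    refine Finset.sum_congr rfl fun j _ => ?_
    have hsq : (√(w j) : ℂ) * √(w j) = w j := by exact_mod_cast Real.mul_self_sqrt (hw j)
    simp only [v, RCLike.inner_apply, Complex.star_def, map_mul, Complex.conj_ofReal,
      Complex.conj_conj]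
    linear_combination z j m * starRingEnd ℂ (z j m') * hsq
  have hv_norm m : ‖v m‖ ^ 2 = lam m := by
    have := hv_inner m m
    rw [inner_self_eq_norm_sq_to_K, diagonal_apply_eq] at this
    exact_mod_cast congrArg Complex.re this
  have hbessel j : ∑ m, c j m / ∑ j', c j' m ≤ 1 := by
    have := Pairwise.sum_norm_inner_sq_div_norm_sq_le
      (fun m m' hmm' => (hv_inner m m').trans (diagonal_apply_ne _ hmm')) (EuclideanSpace.single j 1)
    simp_rw [EuclideanSpace.inner_single_right, PiLp.norm_single, hv_norm] at this
    simp_rw [hcol]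
    convert this using 2 with m
    · simp [v, c, mul_pow, Real.sq_sqrt (hw j)]
    · simp
  simpa only [hrow, hcol] using sum_negMulLog_sum_le_sum_negMulLog_sum c
    (fun j m => mul_nonneg (hw j) (sq_nonneg _)) hbessel

theorem sum_norm_sq_mulVec_of_mem_unitaryGroup {𝕜 ι : Type*} [RCLike 𝕜] [Fintype ι]
    [DecidableEq ι] {U : Matrix ι ι 𝕜} (hU : U ∈ unitaryGroup ι 𝕜) (v : ι → 𝕜) :
    ∑ i, ‖(U *ᵥ v) i‖ ^ 2 = ∑ i, ‖v i‖ ^ 2 := by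
  have h (x : ι → 𝕜) : star x ⬝ᵥ x = ((∑ i, ‖x i‖ ^ 2 : ℝ) : 𝕜) := by
    simp [dotProduct, RCLike.conj_mul]
  have : star (U *ᵥ v) ⬝ᵥ (U *ᵥ v) = star v ⬝ᵥ v := by
    rw [star_mulVec, dotProduct_mulVec, vecMul_vecMul, ← star_eq_conjTranspose,
      Unitary.star_mul_self_of_mem hU, vecMul_one]
  rw [h, h] at this
  exact_mod_cast this

theorem sum_negMulLog_le_of_unitary_eq_sum_vecMulVec {ι J : Type*} [Fintype ι] [DecidableEq ι]
    [Fintype J] {X : Matrix ι ι ℂ} (hX : X ∈ unitaryGroup ι ℂ) (lam : ι → ℝ) (w : J → ℝ)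
    (hw : ∀ j, 0 ≤ w j) (ψ : J → ι → ℂ) (hψ : ∀ j, ∑ a, ‖ψ j a‖ ^ 2 = 1)
    (h : X * diagonal (fun m => (lam m : ℂ)) * Xᴴ
      = ∑ j, (w j : ℂ) • vecMulVec (ψ j) (star (ψ j))) :
    ∑ m, negMulLog (lam m) ≤ ∑ j, negMulLog (w j) := by
  refine sum_negMulLog_le_of_diagonal_eq_sum_vecMulVec lam w hw (fun j => Xᴴ *ᵥ ψ j)
    (fun j => (sum_norm_sq_mulVec_of_mem_unitaryGroup (Unitary.star_mem hX) _).trans (hψ j)) ?_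
  have hXX : Xᴴ * X = 1 := Unitary.star_mul_self_of_mem hX
  calc diagonal (fun m => (lam m : ℂ))
      = Xᴴ * (X * diagonal (fun m => (lam m : ℂ)) * Xᴴ) * X := by
        simp only [← Matrix.mul_assoc, hXX, Matrix.one_mul]
        rw [Matrix.mul_assoc, hXX, Matrix.mul_one]
    _ = _ := by
        rw [h]
        simp only [Finset.mul_sum, Finset.sum_mul, Matrix.mul_smul, Matrix.smul_mul,
          mul_vecMulVec, vecMulVec_mul, star_mulVec, conjTranspose_conjTranspose]

theorem mul_diagonal_mul_conjTranspose_eq_sum_vecMulVec {ι κ α : Type*} [Fintype κ]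
    [DecidableEq κ] [CommSemiring α] [StarRing α] (X : Matrix ι κ α) (d : κ → α) :
    X * diagonal d * Xᴴ = ∑ z, d z • vecMulVec (Xᵀ z) (star (Xᵀ z)) := by
  ext a c
  simp [mul_apply, diagonal_apply, Matrix.sum_apply, vecMulVec_apply, mul_left_comm, mul_assoc]

section BlockDiagonal

variable {o : Type*} {m' n' : o → Type*} [DecidableEq o]

def blockSingle {α : Type*} [Zero α] (b : o) (x : m' b → α) : (Σ i, m' i) → α :=
  Sigma.uncurry (Pi.single (M := fun i => m' i → α) b x)

@[simp]
theorem blockSingle_apply_self {α : Type*} [Zero α] (b : o) (x : m' b → α) (a : m' b) :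
    blockSingle b x ⟨b, a⟩ = x a := by
  simp [blockSingle, Sigma.uncurry]

@[simp]
theorem blockSingle_apply_of_ne {α : Type*} [Zero α] {b i : o} (hi : i ≠ b) (x : m' b → α)
    (a : m' i) : blockSingle b x ⟨i, a⟩ = 0 := by
  simp [blockSingle, Sigma.uncurry, Pi.single_eq_of_ne hi]

theorem blockDiagonal'_pi_single_vecMulVec {α : Type*} [MulZeroClass α] (b : o) (x : m' b → α)
    (y : n' b → α) :
    blockDiagonal' (Pi.single (M := fun i => Matrix (m' i) (n' i) α) b (vecMulVec x y))
      = vecMulVec (blockSingle b x) (blockSingle b y) := by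
  ext ⟨i, a⟩ ⟨i', c⟩
  by_cases hi : i = b
  · subst hi
    by_cases hi' : i' = i
    · subst hi'
      simp [blockDiagonal'_apply_eq, vecMulVec_apply]
    · simp [blockDiagonal'_apply_ne _ _ _ (Ne.symm hi'), vecMulVec_apply, hi']
  · simp [blockDiagonal'_apply, vecMulVec_apply, hi]

theorem star_blockSingle {α : Type*} [AddMonoid α] [StarAddMonoid α] (b : o) (x : m' b → α) :
    star (blockSingle b x) = blockSingle b (star x) := by
  ext ⟨i, a⟩
  by_cases hi : i = b
  · subst hi; simp
  · simp [hi]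

theorem sum_norm_sq_blockSingle {E : Type*} [SeminormedAddCommGroup E] [Fintype o]
    [∀ i, Fintype (m' i)] (b : o) (x : m' b → E) :
    ∑ z, ‖blockSingle b x z‖ ^ 2 = ∑ a, ‖x a‖ ^ 2 := by
  rw [Fintype.sum_sigma, Fintype.sum_eq_single b fun i hi => by simp [hi]]
  simp

theorem transpose_blockDiagonal'_apply {α : Type*} [Zero α] (M : ∀ i, Matrix (m' i) (n' i) α)
    (z : Σ i, n' i) : (blockDiagonal' M)ᵀ z = blockSingle z.1 ((M z.1)ᵀ z.2) := by
  obtain ⟨i, c⟩ := z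
  ext ⟨i', a⟩
  by_cases hi : i' = i
  · subst hi
    simp [blockDiagonal'_apply_eq]
  · simp [blockDiagonal'_apply_ne _ _ _ hi, hi]

theorem blockDiagonal'_mem_unitaryGroup {α : Type*} [CommRing α] [StarRing α] [Fintype o]
    [∀ i, Fintype (m' i)] [∀ i, DecidableEq (m' i)] {U : ∀ i, Matrix (m' i) (m' i) α}
    (hU : ∀ i, U i ∈ unitaryGroup (m' i) α) :
    blockDiagonal' U ∈ unitaryGroup (Σ i, m' i) α := by
  rw [mem_unitaryGroup_iff, star_eq_conjTranspose, blockDiagonal'_conjTranspose,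
    ← blockDiagonal'_mul]
  simp_rw [← star_eq_conjTranspose, mem_unitaryGroup_iff.1 (hU _)]
  exact blockDiagonal'_one

theorem blockDiagonal'_mul_diagonal_mul_conjTranspose {α : Type*} [CommRing α] [StarRing α]
    [Fintype o] [∀ i, Fintype (m' i)] [∀ i, DecidableEq (m' i)] (U : ∀ i, Matrix (m' i) (m' i) α)
    (d : ∀ i, m' i → α) :
    blockDiagonal' (fun i => U i * diagonal (d i) * (U i)ᴴ)
      = blockDiagonal' U * diagonal (fun z => d z.1 z.2) * (blockDiagonal' U)ᴴ := by
  rw [blockDiagonal'_conjTranspose, ← blockDiagonal'_diagonal, ← blockDiagonal'_mul,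
    ← blockDiagonal'_mul]

end BlockDiagonal

theorem shannonEntropy_eq_sum_negMulLog {m : ℕ} (p : Fin m → ℝ) :
    shannonEntropy p = ∑ i, negMulLog (p i) := by
  simp [shannonEntropy, negMulLog, Finset.sum_neg_distrib]

theorem vonNeumannEntropy_eq_sum_negMulLog {ι : Type*} [Fintype ι] [DecidableEq ι]
    {A : Matrix ι ι ℂ} (hA : A.IsHermitian) :
    vonNeumannEntropy A = ∑ i, negMulLog (hA.eigenvalues i) := by
  simp [vonNeumannEntropy, hA, negMulLog, Finset.sum_neg_distrib]

theorem Matrix.IsHermitian.sum_eigenvalues_eq_one {ι : Type*} [Fintype ι] [DecidableEq ι]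
    {A : Matrix ι ι ℂ} (hA : A.IsHermitian) (htr : A.trace = 1) : ∑ i, hA.eigenvalues i = 1 := by
  have := hA.trace_eq_sum_eigenvalues
  rw [htr] at this
  simpa using (congrArg Complex.re this).symm

theorem Matrix.IsHermitian.ofReal_smul_eq_mul_diagonal_mul_conjTranspose {ι : Type*} [Fintype ι]
    [DecidableEq ι] {A : Matrix ι ι ℂ} (hA : A.IsHermitian) (c : ℝ) :
    (c : ℂ) • A = (hA.eigenvectorUnitary : Matrix ι ι ℂ)
      * diagonal (fun m => ((c * hA.eigenvalues m : ℝ) : ℂ)) * (hA.eigenvectorUnitary : Matrix ι ι ℂ)ᴴ := by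
  conv_lhs => rw [hA.spectral_theorem]
  rw [Unitary.conjStarAlgAut_apply, ← Matrix.smul_mul, ← Matrix.mul_smul, ← diagonal_smul]
  congr 3
  ext m
  simp

theorem Matrix.IsHermitian.sum_norm_sq_eigenvectorUnitary_apply {𝕜 ι : Type*} [RCLike 𝕜]
    [Fintype ι] [DecidableEq ι] {A : Matrix ι ι 𝕜} (hA : A.IsHermitian) (m : ι) :
    ∑ a, ‖(hA.eigenvectorUnitary : Matrix ι ι 𝕜) a m‖ ^ 2 = 1 := by
  have := EuclideanSpace.norm_sq_eq (hA.eigenvectorBasis m)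
  rw [hA.eigenvectorBasis.orthonormal.1] at this
  simpa using this.symm

theorem sum_sigma_negMulLog_mul {o : Type*} {κ : o → Type*} [Fintype o] [∀ i, Fintype (κ i)]
    (p : o → ℝ) (q : ∀ i, κ i → ℝ) (hq : ∀ i, ∑ m, q i m = 1) :
    ∑ z : Σ i, κ i, negMulLog (p z.1 * q z.1 z.2)
      = ∑ i, negMulLog (p i) + ∑ i, p i * ∑ m, negMulLog (q i m) := by
  simp [Fintype.sum_sigma, negMulLog_mul, Finset.sum_add_distrib, ← Finset.sum_mul, hq,
    Finset.mul_sum]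

/-- For a block-diagonal density matrix `ρ = ⊕_i p_i·ρ_i`, the infimum of the Shannon
entropies of the weights over all decompositions of `ρ` into pure states of the block
algebra is attained, and equals `H(p) + Σ_i p_i · S_VN(ρ_i)`. -/
theorem isLeast_shannonEntropy_block_pure_decompositions
    (k : ℕ) (n : Fin k → ℕ)
    (p : Fin k → ℝ) (hp0 : ∀ i, 0 ≤ p i) (hp1 : ∑ i, p i = 1)
    (ρs : ∀ i, Matrix (Fin (n i)) (Fin (n i)) ℂ)
    (hρs : ∀ i, (ρs i).PosSemidef ∧ (ρs i).trace = 1)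
    (ρ : Matrix (Σ i : Fin k, Fin (n i)) (Σ i : Fin k, Fin (n i)) ℂ)
    (hρ : ρ = Matrix.blockDiagonal' fun i => (p i : ℂ) • ρs i) :
    IsLeast
      {x : ℝ | ∃ (M : ℕ) (w : Fin M → ℝ) (b : Fin M → Fin k) (φ : ∀ j, Fin (n (b j)) → ℂ),
        (∀ j, 0 ≤ w j) ∧ (∑ j, w j = 1) ∧ (∀ j, ∑ a, ‖φ j a‖ ^ 2 = 1) ∧
        ρ = ∑ j, (w j : ℂ) •
          Matrix.blockDiagonal'
            (Function.update (fun i => (0 : Matrix (Fin (n i)) (Fin (n i)) ℂ)) (b j)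
              (Matrix.vecMulVec (φ j) (star (φ j)))) ∧
        x = shannonEntropy w}
      (shannonEntropy p + ∑ i, p i * vonNeumannEntropy (ρs i)) := by
  have hH i := (hρs i).1.isHermitian
  set U := fun i => ((hH i).eigenvectorUnitary : Matrix (Fin (n i)) (Fin (n i)) ℂ)
  set Λ : (Σ i, Fin (n i)) → ℝ := fun z => p z.1 * (hH z.1).eigenvalues z.2 with hΛ
  have hρX : ρ = blockDiagonal' U * diagonal (fun z => (Λ z : ℂ)) * (blockDiagonal' U)ᴴ := by
    rw [hρ, funext fun i => (hH i).ofReal_smul_eq_mul_diagonal_mul_conjTranspose (p i)]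
    exact blockDiagonal'_mul_diagonal_mul_conjTranspose _ _
  have hsum_eig i : ∑ m, (hH i).eigenvalues m = 1 := (hH i).sum_eigenvalues_eq_one (hρs i).2
  have hvalue : shannonEntropy p + ∑ i, p i * vonNeumannEntropy (ρs i) = ∑ z, negMulLog (Λ z) := by
    rw [sum_sigma_negMulLog_mul p (fun i => (hH i).eigenvalues) hsum_eig,
      shannonEntropy_eq_sum_negMulLog]
    simp_rw [vonNeumannEntropy_eq_sum_negMulLog (hH _)]
  have hpure {b : Fin k} (φ : Fin (n b) → ℂ) :
      blockDiagonal' (Function.update (fun i => (0 : Matrix (Fin (n i)) (Fin (n i)) ℂ)) b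
        (vecMulVec φ (star φ))) = vecMulVec (blockSingle b φ) (star (blockSingle b φ)) := by
    rw [star_blockSingle]
    exact blockDiagonal'_pi_single_vecMulVec _ _ _
  constructor
  · let e := (Fintype.equivFin (Σ i, Fin (n i))).symm
    refine ⟨_, fun j => Λ (e j), fun j => (e j).1, fun j => (U (e j).1)ᵀ (e j).2,
      fun j => mul_nonneg (hp0 _) ((hρs _).1.eigenvalues_nonneg _), ?_,
      fun j => (hH _).sum_norm_sq_eigenvectorUnitary_apply _, ?_, ?_⟩
    · rw [e.sum_comp, Fintype.sum_sigma]
      simp [hΛ, ← Finset.mul_sum, hsum_eig, hp1]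
    · simp_rw [hpure, hρX, mul_diagonal_mul_conjTranspose_eq_sum_vecMulVec,
        transpose_blockDiagonal'_apply, ← e.sum_comp]
    · rw [hvalue, shannonEntropy_eq_sum_negMulLog, ← e.sum_comp]
  · rintro _ ⟨M, w, b, φ, hw0, -, hφ, hdecomp, rfl⟩
    rw [hvalue, shannonEntropy_eq_sum_negMulLog]
    refine sum_negMulLog_le_of_unitary_eq_sum_vecMulVec (X := blockDiagonal' U)
      (blockDiagonal'_mem_unitaryGroup fun i => (hH i).eigenvectorUnitary.2) Λ w hw0
      (fun j => blockSingle (b j) (φ j)) (fun j => (sum_norm_sq_blockSingle _ _).trans (hφ j)) ?_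
    simp_rw [← hρX, hdecomp, hpure]
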